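/- arXiv:1611.08739 — 2 statements merged into one kernel-verified Lean document; each statement's English description precedes it below -/
import Mathlib

section
/- Let E be an extra-special p-group admitting an action of a group R of prime order r ≠ p such that E = [E,R], and suppose E arises as [P, R] where P is a central product of r copies of an extra-special group of order p³ cyclically permuted by R. Then E contains a non-central element of prime order. -/
/-!
For odd `p`, an extra-special `p`-group `E` has class two and its centre has exponent `p`; as
`p ∣ p.choose 2`, the class-two formula `(ab)ⁿ = aⁿbⁿ[b,a]^(n choose 2)` makes `x ↦ xᵖ` an
endomorphism with central image. If its kernel were central too, `|E| ≤ p²` and `E` would be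
abelian.

For `p = 2` the element is built in `P`: pick non-commuting `a, b` in the factor `A₀`. The
centre of `A₀` is `A₀ ⊓ A₁`, of order 2, and `α` maps it onto `A₁ ⊓ A₂ = A₁ ⊓ A₀`, so `α` fixes
`a²`. Hence `u = a⁻¹ α(a)` has order 2, and it does not commute with `v = b⁻¹ α²(b)`, because
among `a, α a, b, α² b` (lying in `A₀, A₁, A₀, A₂`) only `a` and `b` fail to commute.
-/

def IsExtraspecial (p : ℕ) (H : Type*) [Group H] : Prop :=
  IsPGroup p H ∧ commutator H = Subgroup.center H ∧ Nat.card (Subgroup.center H) = p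

open Subgroup
open scoped commutatorElement

section ClassTwo

variable {G : Type*} [Group G]

theorem pow_mul_eq_mul_pow_mul_commutatorElement_pow {a b : G} (ha : Commute ⁅b, a⁆ a)
    (hb : Commute ⁅b, a⁆ b) (n : ℕ) : b ^ n * a = a * b ^ n * ⁅b, a⁆ ^ n := by
  have hconj : a⁻¹ * b * a = ⁅b, a⁆ * b :=
    calc a⁻¹ * b * a = a⁻¹ * (⁅b, a⁆ * a) * b := by group
      _ = ⁅b, a⁆ * b := by rw [ha.eq]; group
  calc b ^ n * a = a * (a⁻¹ * b * a⁻¹⁻¹) ^ n := by rw [conj_pow]; group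
    _ = a * b ^ n * ⁅b, a⁆ ^ n := by
      rw [inv_inv, hconj, hb.mul_pow, (hb.pow_pow n n).eq, mul_assoc]

theorem mul_pow_eq_of_commute_commutatorElement {a b : G} (ha : Commute ⁅b, a⁆ a)
    (hb : Commute ⁅b, a⁆ b) (n : ℕ) :
    (a * b) ^ n = a ^ n * b ^ n * ⁅b, a⁆ ^ n.choose 2 := by
  induction n with
  | zero => simp
  | succ n ih =>
    have hba := pow_mul_eq_mul_pow_mul_commutatorElement_pow ha hb n
    generalize ⁅b, a⁆ = z at *
    calc (a * b) ^ (n + 1) = a ^ n * (b ^ n * a) * b * z ^ n.choose 2 := by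
          rw [pow_succ, ih, mul_assoc _ (z ^ _), ((ha.mul_right hb).pow_left _).eq]; group
      _ = a ^ n * a * b ^ n * (z ^ n * b) * z ^ n.choose 2 := by rw [hba]; group
      _ = a ^ (n + 1) * b ^ (n + 1) * z ^ (n + 1).choose 2 := by
          rw [(hb.pow_left n).eq, Nat.choose_succ_succ, Nat.choose_one_right, pow_add]; group

theorem commute_mul_mul_iff {a b x y : G} (hxb : Commute x b) (hay : Commute a y)
    (hxy : Commute x y) : Commute (a * x) (b * y) ↔ Commute a b := by
  have h₁ : a * x * (b * y) = a * b * (x * y) := by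
    rw [mul_assoc a, ← mul_assoc x, hxb.eq]; simp only [mul_assoc]
  have h₂ : b * y * (a * x) = b * a * (x * y) := by
    rw [mul_assoc b, ← mul_assoc y, ← hay.eq, hxy.eq]; simp only [mul_assoc]
  simp only [Commute, SemiconjBy, h₁, h₂, mul_left_inj]

end ClassTwo

namespace IsExtraspecial

variable {p : ℕ} {H : Type*} [Group H] (hH : IsExtraspecial p H)
include hH

theorem commutatorElement_mem_center (g h : H) : ⁅g, h⁆ ∈ center H :=
  hH.2.1 ▸ commutator_mem_commutator (mem_top g) (mem_top h)

theorem pow_eq_one_of_mem_center {z : H} (hz : z ∈ center H) : z ^ p = 1 := by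
  simpa using congrArg Subtype.val (hH.2.2 ▸ pow_card_eq_one' : (⟨z, hz⟩ : center H) ^ p = 1)

theorem commute_commutatorElement (g h x : H) : Commute ⁅g, h⁆ x :=
  (mem_center_iff.mp (hH.commutatorElement_mem_center g h) x).symm

theorem pow_mem_center (a : H) : a ^ p ∈ center H := by
  refine mem_center_iff.mpr fun g ↦ ?_
  have hconj : g * a ^ p * g⁻¹ = a ^ p := by
    rw [← conj_pow, show g * a * g⁻¹ = ⁅g, a⁆ * a by group,
      (hH.commute_commutatorElement g a a).mul_pow,
      hH.pow_eq_one_of_mem_center (hH.commutatorElement_mem_center g a), one_mul]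
  calc g * a ^ p = g * a ^ p * g⁻¹ * g := by group
    _ = a ^ p * g := by rw [hconj]

theorem not_isMulCommutative (hp : p ≠ 1) : ¬ IsMulCommutative H := fun hcomm ↦
  hp (by rw [← hH.2.2, ← hH.2.1, (commutator_eq_bot_iff H).mpr hcomm, card_bot])

theorem mul_pow (hp : p.Prime) (hp2 : p ≠ 2) (a b : H) : (a * b) ^ p = a ^ p * b ^ p := by
  obtain ⟨m, hm⟩ := hp.dvd_choose_self two_ne_zero (by have := hp.two_le; omega)
  rw [mul_pow_eq_of_commute_commutatorElement (hH.commute_commutatorElement b a a)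
    (hH.commute_commutatorElement b a b), hm, pow_mul,
    hH.pow_eq_one_of_mem_center (hH.commutatorElement_mem_center b a), one_pow, mul_one]

theorem prime_sq_lt_card [Finite H] (hp : p.Prime) : p ^ 2 < Nat.card H := by
  have : Fact p.Prime := ⟨hp⟩
  by_contra! hle
  obtain ⟨k, hk⟩ := IsPGroup.iff_card.mp hH.1
  have hquot := card_eq_card_quotient_mul_card_subgroup (center H)
  obtain ⟨m, -, hm⟩ := (Nat.dvd_prime_pow hp).mp (hk ▸ hquot ▸ dvd_mul_right _ _)
  rw [hH.2.2, hm, ← pow_succ] at hquot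
  have hm1 : m ≤ 1 := by
    have := (Nat.pow_le_pow_iff_right hp.one_lt).mp (hquot ▸ hle)
    omega
  have : IsCyclic (H ⧸ center H) :=
    isCyclic_of_card_dvd_prime (hm ▸ (pow_dvd_pow p hm1).trans (pow_one p).dvd)
  exact hH.not_isMulCommutative hp.ne_one (isMulCommutative_of_isCyclic_quotient_center_self H)

theorem exists_orderOf_eq_notMem_center [Finite H] (hp : p.Prime) (hp2 : p ≠ 2) :
    ∃ a : H, orderOf a = p ∧ a ∉ center H := by
  have : Fact p.Prime := ⟨hp⟩
  by_contra! h
  let φ : H →* H := MonoidHom.mk' (· ^ p) (hH.mul_pow hp hp2)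
  have hker : φ.ker ≤ center H := fun a ha ↦ by
    rcases eq_or_ne a 1 with rfl | ha1
    · exact one_mem _
    · exact h a (orderOf_eq_prime ha ha1)
  have hrange : φ.range ≤ center H := by
    rintro _ ⟨a, rfl⟩
    exact hH.pow_mem_center a
  have hlt := hH.prime_sq_lt_card hp
  rw [← φ.ker.card_mul_index, index_ker, sq, ← hH.2.2] at hlt
  exact hlt.not_ge (Nat.mul_le_mul (card_le_of_le hker) (card_le_of_le hrange))

end IsExtraspecial

theorem Subgroup.map_subtype_center {G : Type*} [Group G] (A : Subgroup G) :
    (center A).map A.subtype = A ⊓ centralizer A := by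
  ext x
  simp [mem_center_iff, mem_centralizer_iff, eq_comm, and_comm]

theorem MulEquiv.apply_eq_self_of_map_eq_of_card_eq_two {G : Type*} [Group G] (f : G ≃* G)
    {S : Subgroup G} (hS : Nat.card S = 2) (hf : S.map f.toMonoidHom = S) {x : G} (hx : x ∈ S) :
    f x = x := by
  rcases eq_or_ne x 1 with rfl | hx1
  · exact map_one f
  have hfx : f x ∈ S := hf ▸ mem_map_of_mem _ hx
  obtain ⟨y, -, huniq⟩ := (Nat.card_eq_two_iff' (1 : S)).mp hS
  have h₁ := huniq ⟨f x, hfx⟩ (by simpa [Subtype.ext_iff] using hx1)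
  have h₂ := huniq ⟨x, hx⟩ (by simpa [Subtype.ext_iff] using hx1)
  simpa using congrArg Subtype.val (h₁.trans h₂.symm)

section CentralProduct

variable {P ι : Type*} [Group P] {A : ι → Subgroup P}
  (hcomm : ∀ i j, i ≠ j → ∀ x ∈ A i, ∀ y ∈ A j, Commute x y)
  (hcent : ∀ i j, i ≠ j → A i ⊓ A j = A i ⊓ centralizer (A i))
  (α : MulAut P) {i j k : ι} (hij : i ≠ j) (hjk : j ≠ k)
  (hi : (A i).map α.toMonoidHom = A j) (hj : (A j).map α.toMonoidHom = A k)
include hcent hij hjk hi hj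

theorem map_inf_eq_self_of_map_eq : (A i ⊓ A j).map α.toMonoidHom = A i ⊓ A j := by
  rw [map_inf_eq _ _ _ α.injective, hi, hj, hcent j k hjk, ← hcent j i hij.symm, inf_comm]

include hcomm in
theorem exists_orderOf_eq_two_not_commute (hik : i ≠ k) (hA : IsExtraspecial 2 (A i)) :
    ∃ a ∈ A i, ∃ b ∈ A i, orderOf (a⁻¹ * α a) = 2 ∧ ¬ Commute (a⁻¹ * α a) (b⁻¹ * α (α b)) := by
  obtain ⟨a, b, hab⟩ : ∃ a b : A i, ¬ Commute a b := by
    by_contra! h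
    exact hA.not_isMulCommutative (by decide) ⟨⟨fun a b ↦ (h a b).eq⟩⟩
  have hab' : ¬ Commute (a : P) b := fun h ↦ hab (Subtype.ext h)
  have hZ : A i ⊓ A j = (center (A i)).map (A i).subtype := by
    rw [hcent i j hij, map_subtype_center]
  have hfix : α ((a : P) ^ 2) = (a : P) ^ 2 :=
    α.apply_eq_self_of_map_eq_of_card_eq_two
      (by rw [hZ, card_map_of_injective (subtype_injective _), hA.2.2])
      (map_inf_eq_self_of_map_eq hcent α hij hjk hi hj)
      (hZ ▸ ⟨a ^ 2, hA.pow_mem_center a, rfl⟩)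
  have hαa : α a ∈ A j := hi ▸ mem_map_of_mem _ a.2
  have hααb : α (α b) ∈ A k := hj ▸ mem_map_of_mem _ (hi ▸ mem_map_of_mem _ b.2)
  refine ⟨a, a.2, b, b.2, orderOf_eq_prime ?_ ?_, ?_⟩
  · rw [(hcomm i j hij _ a.2 _ hαa).inv_left.mul_pow, inv_pow, ← map_pow, hfix, inv_mul_cancel]
  · rw [Ne, inv_mul_eq_one]
    intro ha
    have : (a : P) ∈ A i ⊓ centralizer (A i) := hcent i j hij ▸ ⟨a.2, ha ▸ hαa⟩
    exact hab' (mem_centralizer_iff.mp this.2 b b.2).symm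
  · rwa [commute_mul_mul_iff (hcomm j i hij.symm _ hαa _ (inv_mem b.2))
      (hcomm i k hik _ (inv_mem a.2) _ hααb) (hcomm j k hjk _ hαa _ hααb), Commute.inv_inv_iff]

end CentralProduct

theorem stmt_14_general {P : Type*} [Group P] [Finite P] (p r : ℕ) (hp : p.Prime)
    (hr : r.Prime) (hrp : r ≠ p) [NeZero r]
    (Asub : Fin r → Subgroup P)
    (hextra : ∀ i : Fin r, IsExtraspecial p (Asub i))
    (hcomm : ∀ i j : Fin r, i ≠ j → ∀ x ∈ Asub i, ∀ y ∈ Asub j, Commute x y)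
    (hcent : ∀ i j : Fin r, i ≠ j →
      Asub i ⊓ Asub j = Asub i ⊓ Subgroup.centralizer (Asub i : Set P))
    (α : MulAut P)
    (hperm : ∀ i : Fin r, (Asub i).map α.toMonoidHom = Asub (i + 1))
    (E : Subgroup P)
    (hEdef : E = Subgroup.closure {y : P | ∃ g : P, y = g⁻¹ * α g})
    (hEextra : IsExtraspecial p E) :
    ∃ x ∈ E, (∃ q : ℕ, q.Prime ∧ orderOf x = q) ∧ ∃ y ∈ E, ¬ Commute x y := by
  rcases eq_or_ne p 2 with rfl | hp2
  · have hr3 : 3 ≤ r := by have := hr.two_le; omega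
    have hdistinct :
        (0 : Fin r) ≠ 0 + 1 ∧ (0 + 1 : Fin r) ≠ 0 + 1 + 1 ∧ (0 : Fin r) ≠ 0 + 1 + 1 := by
      simp [Fin.ext_iff, Fin.val_add, Nat.mod_eq_of_lt (show 1 < r by omega),
        Nat.mod_eq_of_lt (show 2 < r by omega)]
    obtain ⟨a, -, b, -, hu, huv⟩ := exists_orderOf_eq_two_not_commute hcomm hcent α hdistinct.1
      hdistinct.2.1 (hperm 0) (hperm (0 + 1)) hdistinct.2.2 (hextra 0)
    have hmem : ∀ g, g⁻¹ * α g ∈ E := fun g ↦ hEdef ▸ subset_closure ⟨g, rfl⟩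
    refine ⟨_, hmem a, ⟨2, Nat.prime_two, hu⟩, _, ?_, huv⟩
    simpa [mul_assoc] using mul_mem (hmem b) (hmem (α b))
  · obtain ⟨a, ha, haZ⟩ := hEextra.exists_orderOf_eq_notMem_center hp hp2
    obtain ⟨b, hb⟩ : ∃ b : E, ¬ Commute a b := by
      simpa [mem_center_iff, Commute, SemiconjBy, eq_comm] using haZ
    exact ⟨a, a.2, ⟨p, hp, by rwa [orderOf_coe]⟩, b, b.2, fun h ↦ hb (Subtype.ext h)⟩

/-- Let `E` be an extra-special `p`-group acted on by a group `R = ⟨α⟩` of prime order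
`r ≠ p` with `E = [E,R]`, where `E` arises as `[P,R]` for `P` a central product of `r`
copies of an extra-special group of order `p³` cyclically permuted by `R`. Then `E`
contains a non-central element of prime order. -/
theorem stmt_14 {P : Type*} [Group P] [Finite P] (p r : ℕ) (hp : p.Prime)
    (hr : r.Prime) (hrp : r ≠ p) [NeZero r]
    (Asub : Fin r → Subgroup P)
    (hextra : ∀ i : Fin r, IsExtraspecial p (Asub i))
    (hcard : ∀ i : Fin r, Nat.card (Asub i) = p ^ 3)
    (hiso : ∀ i : Fin r, Nonempty ((Asub i) ≃* (Asub 0)))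
    (hsup : ⨆ i, Asub i = ⊤)
    (hcomm : ∀ i j : Fin r, i ≠ j → ∀ x ∈ Asub i, ∀ y ∈ Asub j, Commute x y)
    (hcent : ∀ i j : Fin r, i ≠ j →
      Asub i ⊓ Asub j = Asub i ⊓ Subgroup.centralizer (Asub i : Set P))
    (α : MulAut P) (hord : orderOf α = r)
    (hperm : ∀ i : Fin r, (Asub i).map α.toMonoidHom = Asub (i + 1))
    (E : Subgroup P)
    (hEdef : E = Subgroup.closure {y : P | ∃ g : P, y = g⁻¹ * α g})
    (hEextra : IsExtraspecial p E)
    (hEcomm : E = Subgroup.closure {y : P | ∃ g ∈ E, y = g⁻¹ * α g}) :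
    ∃ x ∈ E, (∃ q : ℕ, q.Prime ∧ orderOf x = q) ∧ ∃ y ∈ E, ¬ Commute x y :=
  stmt_14_general p r hp hr hrp Asub hextra hcomm hcent α hperm E hEdef hEextra
end

section
/- Let H = C_q wr A with A finite abelian acting regularly on the base B = C_q^{|A|}, and let a ∈ A be a nontrivial element. Then the subgroup B_a = [B,a] is normal in H and contains the center Z(H). -/
/-- The automorphism of the base group `B = K → M` of the regular wreath product
`M ≀ K` given by the (left regular) permutation action of `k ∈ K`. -/
def shiftAut {K M : Type*} [Group K] [Group M] (k : K) : MulAut (K → M) where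
  toFun f := fun t => f (k⁻¹ * t)
  invFun f := fun t => f (k * t)
  left_inv f := by funext t; simp [← mul_assoc]
  right_inv f := by funext t; simp [← mul_assoc]
  map_mul' f g := rfl

/-- The regular permutation action of `K` on the base group `K → M`, as a
homomorphism into the automorphism group; `M ≀ K = (K → M) ⋊ K` via this action. -/
def shiftHom (K M : Type*) [Group K] [Group M] : K →* MulAut (K → M) where
  toFun := shiftAut
  map_one' := by ext f t; simp [shiftAut]
  map_mul' a b := by ext f t; simp [shiftAut, mul_assoc]

/-!
The base `B = A → C_q` is abelian, so `[B, a]` is the image of the endomorphism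
`b ↦ b⁻¹ b^a`; this endomorphism commutes with the shifts by the abelian group `A`, so its
image is normal. A central element has trivial `A`-component, since it centralises the delta
functions, and a constant base component, since it centralises `A`. A constant `c` is
`b⁻¹ b^a` for `b (a ^ n) = c ^ (-n)`, which is well defined because `c ^ q = 1` and `q` divides
the order of `a`.
-/

namespace SemidirectProduct

variable {N G : Type*} [Group N] [Group G] {φ : G →* MulAut N}

theorem normal_map_inl (S : Subgroup N) [S.Normal] (hS : ∀ g, ∀ n ∈ S, φ g n ∈ S) :
    (S.map (inl : N →* N ⋊[φ] G)).Normal where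
  conj_mem := by
    rintro _ ⟨n, hn, rfl⟩ x
    have hconj : x * inl n * x⁻¹ = inl (x.left * φ x.right n * x.left⁻¹) := by
      conv_lhs => rw [← inl_left_mul_inr_right x]
      simp only [map_mul, inl_aut, map_inv]
      group
    rw [hconj]
    exact ⟨_, Subgroup.Normal.conj_mem inferInstance _ (hS _ _ hn) _, rfl⟩

end SemidirectProduct

section RegularWreath

variable {K M : Type*}

theorem shiftAut_apply [Group K] [Group M] (k : K) (f : K → M) (t : K) :
    shiftAut k f t = f (k⁻¹ * t) := rfl

theorem right_eq_one_of_mem_center [Group K] [Group M] [Nontrivial M]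
    {z : (K → M) ⋊[shiftHom K M] K} (hz : z ∈ Subgroup.center _) : z.right = 1 := by
  classical
  by_contra hne
  obtain ⟨m, hm⟩ := exists_ne (1 : M)
  have hcomm := congrArg (fun x => x.left z.right)
    (Subgroup.mem_center_iff.mp hz (SemidirectProduct.inl (Pi.mulSingle 1 m)))
  simp only [SemidirectProduct.mul_left, SemidirectProduct.left_inl,
    SemidirectProduct.right_inl, map_one, MulAut.one_apply, Pi.mul_apply] at hcomm
  change _ = _ * shiftAut _ _ _ at hcomm
  rw [shiftAut_apply, inv_mul_cancel, Pi.mulSingle_eq_same, Pi.mulSingle_eq_of_ne hne,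
    one_mul] at hcomm
  exact hm (mul_eq_left.mp hcomm.symm)

theorem left_apply_eq_of_mem_center [Group K] [Group M] [Nontrivial M]
    {z : (K → M) ⋊[shiftHom K M] K} (hz : z ∈ Subgroup.center _) (t : K) :
    z.left t = z.left 1 := by
  have hcomm := congrArg (fun x => x.left t)
    (Subgroup.mem_center_iff.mp hz (SemidirectProduct.inr t))
  simp only [SemidirectProduct.mul_left, SemidirectProduct.left_inr,
    SemidirectProduct.right_inr, right_eq_one_of_mem_center hz, map_one, Pi.mul_apply,
    Pi.one_apply, one_mul, mul_one] at hcomm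
  change shiftAut t z.left t = _ at hcomm
  rwa [shiftAut_apply, inv_mul_cancel, eq_comm] at hcomm

def shiftCommutatorHom [Group K] [CommGroup M] (a : K) : (K → M) →* (K → M) where
  toFun b := b⁻¹ * shiftAut a b
  map_one' := by simp
  map_mul' b c := by
    simp only [mul_inv, map_mul]
    exact mul_mul_mul_comm _ _ _ _

theorem shiftCommutatorHom_apply [Group K] [CommGroup M] (a : K) (b : K → M) (t : K) :
    shiftCommutatorHom a b t = (b t)⁻¹ * b (a⁻¹ * t) := rfl

theorem closure_shiftCommutator_eq_range [Group K] [CommGroup M] (a : K) :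
    Subgroup.closure {x : K → M | ∃ b, x = b⁻¹ * shiftAut a b} =
      (shiftCommutatorHom a).range := by
  have hset :
      {x : K → M | ∃ b, x = b⁻¹ * shiftAut a b} = Set.range (shiftCommutatorHom a) := by
    ext x
    simp [shiftCommutatorHom, eq_comm]
  rw [hset, ← MonoidHom.coe_range, Subgroup.closure_eq]

theorem shiftAut_shiftCommutatorHom [CommGroup K] [CommGroup M] (k a : K) (b : K → M) :
    shiftAut k (shiftCommutatorHom a b) = shiftCommutatorHom a (shiftAut k b) := by
  funext t
  simp only [shiftAut_apply, shiftCommutatorHom_apply, mul_left_comm]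

theorem shiftAut_mem_range_shiftCommutatorHom [CommGroup K] [CommGroup M] (k a : K)
    {x : K → M} (hx : x ∈ (shiftCommutatorHom a).range) :
    shiftAut k x ∈ (shiftCommutatorHom a).range := by
  obtain ⟨b, rfl⟩ := hx
  exact ⟨shiftAut k b, (shiftAut_shiftCommutatorHom k a b).symm⟩

/-- With `t = a ^ e t`, the preimage is `t ↦ c ^ (-e t)`: consecutive exponents differ by `1`
modulo `orderOf a`, which `c` ignores. -/
theorem const_mem_range_shiftCommutatorHom [Group K] [CommGroup M] {a : K}
    (ha : Subgroup.zpowers a = ⊤) {c : M} (hc : c ^ orderOf a = 1) :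
    (fun _ => c) ∈ (shiftCommutatorHom a : (K → M) →* (K → M)).range := by
  have hlog : ∀ t : K, ∃ n : ℤ, a ^ n = t := fun t =>
    Subgroup.mem_zpowers_iff.mp (ha ▸ Subgroup.mem_top t)
  choose e he using hlog
  refine ⟨fun t => c ^ (-e t), funext fun t => ?_⟩
  have hdvd : (orderOf a : ℤ) ∣ e t - e (a⁻¹ * t) - 1 := by
    refine orderOf_dvd_iff_zpow_eq_one.mpr ?_
    rw [zpow_sub, zpow_sub, he, he, zpow_one]
    group
  obtain ⟨j, hj⟩ := hdvd
  calc (c ^ (-e t))⁻¹ * c ^ (-e (a⁻¹ * t))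
      = c ^ (e t - e (a⁻¹ * t) - 1) * c := by
        rw [← zpow_neg, neg_neg, ← zpow_add_one, ← zpow_add]
        ring_nf
    _ = c := by rw [hj, zpow_mul, zpow_natCast, hc, one_zpow, one_mul]

end RegularWreath

theorem stmt_17_general (q : ℕ) (hq : q.Prime) {A : Type*} [CommGroup A]
    (k : ℕ) (hk : 1 ≤ k) (hA : Nat.card A = q ^ k)
    (a : A) (ha : Subgroup.zpowers a = ⊤) :
    ((Subgroup.closure {x : A → Multiplicative (ZMod q) |
        ∃ b : A → Multiplicative (ZMod q), x = b⁻¹ * shiftAut a b}).map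
          (SemidirectProduct.inl (φ := shiftHom A (Multiplicative (ZMod q))))).Normal ∧
    Subgroup.center ((A → Multiplicative (ZMod q))
        ⋊[shiftHom A (Multiplicative (ZMod q))] A)
      ≤ (Subgroup.closure {x : A → Multiplicative (ZMod q) |
          ∃ b : A → Multiplicative (ZMod q), x = b⁻¹ * shiftAut a b}).map
            (SemidirectProduct.inl (φ := shiftHom A (Multiplicative (ZMod q)))) := by
  have : Fact (1 < q) := ⟨hq.one_lt⟩
  rw [closure_shiftCommutator_eq_range]
  refine ⟨SemidirectProduct.normal_map_inl _ fun g _ => shiftAut_mem_range_shiftCommutatorHom g a,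
    fun z hz => ⟨z.left, ?_, ?_⟩⟩
  · have horder : orderOf a = q ^ k := by
      rw [← Nat.card_zpowers, ha, Subgroup.card_top, hA]
    have hcq : z.left 1 ^ q = 1 := by
      rw [← toAdd_eq_zero, toAdd_pow, nsmul_eq_mul, ZMod.natCast_self, zero_mul]
    have hc : z.left 1 ^ orderOf a = 1 := orderOf_dvd_iff_pow_eq_one.mp <|
      (orderOf_dvd_of_pow_eq_one hcq).trans (horder ▸ dvd_pow_self q (by omega))
    rw [funext (left_apply_eq_of_mem_center hz)]
    exact const_mem_range_shiftCommutatorHom ha hc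
  · ext
    · rfl
    · exact (right_eq_one_of_mem_center hz).symm

/-- Let `H = C_q ≀ A` with `A` cyclic of order `q^k` (`k ≥ 1`) acting regularly on the
base `B = C_q^{|A|}`, and let `a` be a generator of `A`. Then `B_a = [B,a]` is normal
in `H` and contains the center `Z(H)`. -/
theorem stmt_17 (q : ℕ) (hq : q.Prime) [NeZero q] {A : Type*} [CommGroup A]
    [Finite A] (k : ℕ) (hk : 1 ≤ k) (hA : Nat.card A = q ^ k)
    (a : A) (ha : Subgroup.zpowers a = ⊤) :
    ((Subgroup.closure {x : A → Multiplicative (ZMod q) |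
        ∃ b : A → Multiplicative (ZMod q), x = b⁻¹ * shiftAut a b}).map
          (SemidirectProduct.inl (φ := shiftHom A (Multiplicative (ZMod q))))).Normal ∧
    Subgroup.center ((A → Multiplicative (ZMod q))
        ⋊[shiftHom A (Multiplicative (ZMod q))] A)
      ≤ (Subgroup.closure {x : A → Multiplicative (ZMod q) |
          ∃ b : A → Multiplicative (ZMod q), x = b⁻¹ * shiftAut a b}).map
            (SemidirectProduct.inl (φ := shiftHom A (Multiplicative (ZMod q)))) :=
  stmt_17_general q hq k hk hA a ha
end
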